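/- arXiv:1303.0099 — 3 statements merged into one kernel-verified Lean document; each statement's English description precedes it below -/
import Mathlib

section
/- Let N ≥ 3 be a natural number. For every smooth compactly supported function u : ℝ^N → ℝ one has the Hardy inequality ((N−2)²/4) · ∫_{ℝ^N} u(x)²/|x|² dx ≤ ∫_{ℝ^N} |∇u(x)|² dx. -/
open MeasureTheory Measure Set Filter Topology Metric
open scoped ENNReal NNReal

lemma bridge_integral (m : ℕ) (h : ℝ → ℝ) :
    ∫ r : Ioi (0:ℝ), h r ∂(Measure.volumeIoiPow m) = ∫ r in Ioi (0:ℝ), r ^ m * h r := by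
  rw [Measure.volumeIoiPow]
  simp only [ENNReal.ofReal]
  rw [integral_withDensity_eq_integral_smul ((measurable_subtype_coe.pow_const _).real_toNNReal),
    integral_subtype_comap measurableSet_Ioi (fun a : ℝ => Real.toNNReal (a ^ m) • h a)]
  refine setIntegral_congr_fun measurableSet_Ioi fun x hx => ?_
  rw [NNReal.smul_def, Real.coe_toNNReal _ (pow_nonneg hx.out.le _), smul_eq_mul]

lemma bridge_integrable (m : ℕ) (h : ℝ → ℝ) :
    Integrable (fun r : Ioi (0:ℝ) => h r) (Measure.volumeIoiPow m) ↔
      IntegrableOn (fun r => r ^ m * h r) (Ioi (0:ℝ)) := by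
  rw [Measure.volumeIoiPow]
  simp only [ENNReal.ofReal]
  rw [integrable_withDensity_iff_integrable_smul ((measurable_subtype_coe.pow_const _).real_toNNReal)]
  rw [show (fun r : Ioi (0:ℝ) => Real.toNNReal ((r:ℝ) ^ m) • h r)
      = ((fun a : ℝ => Real.toNNReal (a ^ m) • h a) ∘ Subtype.val) from rfl,
    ← (MeasurableEmbedding.subtype_coe measurableSet_Ioi).integrable_map_iff,
    map_comap_subtype_coe measurableSet_Ioi]
  refine integrable_congr ?_
  filter_upwards [ae_restrict_mem measurableSet_Ioi] with x hx
  rw [NNReal.smul_def, Real.coe_toNNReal _ (pow_nonneg hx.out.le _), smul_eq_mul]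

lemma oneDim (N : ℕ) (hN : 3 ≤ N) (f fd G : ℝ → ℝ)
    (hf : Continuous f) (hfd : ∀ r, HasDerivAt f (fd r) r) (hfdc : Continuous fd)
    (hG : ∀ r, |fd r| ≤ G r)
    (R : ℝ) (hR1 : 1 ≤ R) (hfR : ∀ r, R ≤ r → f r = 0)
    (hA : IntegrableOn (fun r => r ^ (N-1) * (f r ^ 2 / r ^ 2)) (Ioi (0:ℝ)))
    (hB : IntegrableOn (fun r => r ^ (N-1) * G r ^ 2) (Ioi (0:ℝ))) :
    ((N:ℝ) - 2) ^ 2 / 4 * ∫ r in Ioi (0:ℝ), r ^ (N-1) * (f r ^ 2 / r ^ 2) ≤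
      ∫ r in Ioi (0:ℝ), r ^ (N-1) * G r ^ 2 := by
  set c : ℝ := (N:ℝ) - 2 with hcdef
  have hc : 0 < c := by
    have : (3:ℝ) ≤ (N:ℝ) := by exact_mod_cast hN
    simp only [hcdef]; linarith
  set g : ℝ → ℝ := fun r => f r ^ 2 * r ^ (N-2) with hgdef
  set gd : ℝ → ℝ := fun r => 2 * f r * fd r * r ^ (N-2) + c * (f r ^ 2 * r ^ (N-3)) with hgddef
  have hcast : ((N - 2 : ℕ) : ℝ) = c := by
    rw [hcdef, Nat.cast_sub (by omega)]; norm_num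
  have key : ∀ r : ℝ, HasDerivAt g (gd r) r := by
    intro r
    have h1 := ((hfd r).pow 2).mul (hasDerivAt_pow (N-2) r)
    convert h1 using 1
    · rfl
    · rfl
    · rfl
    have h3 : N - 2 - 1 = N - 3 := by omega
    rw [hgddef]
    simp only [h3, hcast, Pi.pow_apply]
    push_cast
    ring
  -- gd vanishes for large r
  have hgd0 : ∀ r, R ≤ r → gd r = 0 := by
    intro r hr; simp [hgddef, hfR r hr]
  -- integrability of gd on Ioi 0
  have hgdc : Continuous gd := by
    refine ((((continuous_const.mul hf).mul hfdc).mul (continuous_pow _)).add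
      (continuous_const.mul ((hf.pow 2).mul (continuous_pow _))))
  have hgdInt : IntegrableOn gd (Ioi (0:ℝ)) := by
    have hsub : Ioi (0:ℝ) = Ioc (0:ℝ) R ∪ Ioi R := (Ioc_union_Ioi_eq_Ioi (by linarith)).symm
    rw [hsub, integrableOn_union]
    constructor
    · exact hgdc.integrableOn_Ioc
    · refine (integrableOn_congr_fun (fun r hr => (hgd0 r (le_of_lt hr)).symm) measurableSet_Ioi).mp
        (integrableOn_zero)
  -- FTC on Ioi 0
  have hzero : ∫ r in Ioi (0:ℝ), gd r = 0 := by
    have htend : Tendsto g atTop (𝓝 0) := by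
      refine Tendsto.congr' ?_ tendsto_const_nhds
      filter_upwards [eventually_ge_atTop R] with r hr
      simp [hgdef, hfR r hr]
    have := integral_Ioi_of_hasDerivAt_of_tendsto (a := 0) (f := g) (f' := gd)
      (key 0).continuousAt.continuousWithinAt (fun x _ => key x) hgdInt htend
    rw [this, hgdef]
    simp [zero_pow (show N - 2 ≠ 0 by omega)]
  -- pointwise inequality on Ioi 0
  have hpt : ∀ r ∈ Ioi (0:ℝ),
      c ^ 2 / 4 * (r ^ (N-1) * (f r ^ 2 / r ^ 2)) ≤ r ^ (N-1) * G r ^ 2 + c / 2 * gd r := by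
    intro r hr
    have hr0 : (0:ℝ) < r := hr
    have h31 : r ^ (N-1) = r ^ (N-3) * r ^ 2 := by
      rw [← pow_add]; congr 1; omega
    have h21 : r ^ (N-2) = r ^ (N-3) * r := by
      rw [← pow_succ]; congr 1; omega
    have hphi : r ^ (N-1) * (f r ^ 2 / r ^ 2) = f r ^ 2 * r ^ (N-3) := by
      rw [h31]; field_simp
    rw [hphi]
    have hgdr : gd r = 2 * f r * fd r * r ^ (N-2) + c * (f r ^ 2 * r ^ (N-3)) := rfl
    rw [hgdr, h21, h31]
    have hb : |fd r * r| ≤ G r * r := by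
      rw [abs_mul, abs_of_pos hr0]
      exact mul_le_mul_of_nonneg_right (hG r) hr0.le
    have habs : -(f r * (fd r * r)) ≤ |f r| * (G r * r) := by
      calc -(f r * (fd r * r)) ≤ |f r * (fd r * r)| := neg_le_abs _
        _ = |f r| * |fd r * r| := abs_mul _ _
        _ ≤ |f r| * (G r * r) := mul_le_mul_of_nonneg_left hb (abs_nonneg _)
    have hGr : 0 ≤ G r * r := le_trans (abs_nonneg _) hb
    have hinner : 0 ≤ G r ^ 2 * r ^ 2 + c * (f r * (fd r * r)) + c ^ 2 / 4 * f r ^ 2 := by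
      nlinarith [sq_nonneg (G r * r - c * |f r| / 2), sq_abs (f r),
        mul_le_mul_of_nonneg_left habs hc.le]
    have hpow : (0:ℝ) ≤ r ^ (N-3) := pow_nonneg hr0.le _
    nlinarith [mul_nonneg hpow hinner]
  -- integrate
  have hInt1 : IntegrableOn (fun r => c ^ 2 / 4 * (r ^ (N-1) * (f r ^ 2 / r ^ 2))) (Ioi (0:ℝ)) :=
    hA.const_mul _
  have hInt2 : IntegrableOn (fun r => r ^ (N-1) * G r ^ 2 + c / 2 * gd r) (Ioi (0:ℝ)) :=
    hB.add (hgdInt.const_mul _)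
  have hmono := setIntegral_mono_on hInt1 hInt2 measurableSet_Ioi hpt
  rw [integral_add hB (hgdInt.const_mul _), integral_const_mul, integral_const_mul, hzero] at hmono
  linarith

lemma hardy_main (N : ℕ) (hN : 3 ≤ N) {E : Type*} [NormedAddCommGroup E]
    [InnerProductSpace ℝ E] [FiniteDimensional ℝ E] [MeasurableSpace E] [BorelSpace E]
    (hdim : Module.finrank ℝ E = N) (μ : Measure E) [μ.IsAddHaarMeasure]
    (u : E → ℝ) (hu : ContDiff ℝ (⊤ : ℕ∞) u) (hsupp : HasCompactSupport u) :
    ((N : ℝ) - 2) ^ 2 / 4 * ∫ x, u x ^ 2 / ‖x‖ ^ 2 ∂μ ≤ ∫ x, ‖gradient u x‖ ^ 2 ∂μ := by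
  classical
  haveI : Nontrivial E := Module.nontrivial_of_finrank_pos (R := ℝ) (by omega : 0 < Module.finrank ℝ E)
  set c : ℝ := (N : ℝ) - 2 with hcdef
  have hc : 0 < c := by
    have : (3:ℝ) ≤ (N:ℝ) := by exact_mod_cast hN
    rw [hcdef]; linarith
  set F₁ : E → ℝ := fun x => u x ^ 2 / ‖x‖ ^ 2 with hF₁
  set F₂ : E → ℝ := fun x => ‖gradient u x‖ ^ 2 with hF₂
  -- basic continuity facts
  have hu_cont : Continuous u := hu.continuous
  have hgrad_cont : Continuous (gradient u) := by
    show Continuous fun x => (InnerProductSpace.toDual ℝ E).symm (fderiv ℝ u x)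
    exact (InnerProductSpace.toDual ℝ E).symm.continuous.comp (hu.continuous_fderiv (by simp))
  have hgrad_norm : ∀ y, ‖gradient u y‖ = ‖fderiv ℝ u y‖ := fun y =>
    LinearIsometryEquiv.norm_map _ _
  -- support bounds
  obtain ⟨Mu, hMu⟩ := hu_cont.bounded_above_of_compact_support hsupp
  have hMu0 : 0 ≤ Mu := le_trans (norm_nonneg _) (hMu 0)
  obtain ⟨R₀, hR₀⟩ := hsupp.isBounded.subset_closedBall 0
  set R : ℝ := max R₀ 0 + 1 with hRdef
  have hR1 : (1:ℝ) ≤ R := by rw [hRdef]; nlinarith [le_max_right R₀ 0]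
  have huR : ∀ x : E, R ≤ ‖x‖ → u x = 0 := by
    intro x hx
    apply image_eq_zero_of_notMem_tsupport
    intro hmem
    have h1 := hR₀ hmem
    rw [mem_closedBall, dist_zero_right] at h1
    have h2 : R₀ ≤ max R₀ 0 := le_max_left _ _
    rw [hRdef] at hx; linarith
  -- norm of r • ω
  have hnorm : ∀ (ω : sphere (0:E) 1) (r : ℝ), 0 ≤ r → ‖r • (ω : E)‖ = r := by
    intro ω r hr
    rw [norm_smul, mem_sphere_zero_iff_norm.1 ω.2, mul_one, Real.norm_eq_abs, abs_of_nonneg hr]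
  -- measure-theoretic setup
  have hMP : MeasurePreserving (homeomorphUnitSphereProd E)
      (μ.comap Subtype.val) (μ.toSphere.prod (Measure.volumeIoiPow (N - 1))) := by
    have h := μ.measurePreserving_homeomorphUnitSphereProd
    rw [hdim] at h
    exact h
  have hpoint : ∀ x : ({0}ᶜ : Set E),
      (((homeomorphUnitSphereProd E) x).2 : ℝ) • (((homeomorphUnitSphereProd E) x).1 : E)
        = (x : E) := by
    intro x
    have hx0 : (x : E) ≠ 0 := x.2
    simp only [homeomorphUnitSphereProd_apply_fst_coe, homeomorphUnitSphereProd_apply_snd_coe]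
    exact smul_inv_smul₀ (norm_ne_zero_iff.2 hx0) _
  have comp_eq : ∀ H : E → ℝ,
      ((fun p : sphere (0:E) 1 × Ioi (0:ℝ) => H ((p.2 : ℝ) • (p.1 : E))) ∘
        (homeomorphUnitSphereProd E)) = fun x : ({0}ᶜ : Set E) => H ↑x := by
    intro H; funext x
    simp only [Function.comp_apply]
    rw [hpoint x]
  have transfer_eq : ∀ H : E → ℝ,
      ∫ x, H x ∂μ = ∫ p : sphere (0:E) 1 × Ioi (0:ℝ), H ((p.2 : ℝ) • (p.1 : E))
        ∂(μ.toSphere.prod (Measure.volumeIoiPow (N - 1))) := by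
    intro H
    rw [← hMP.integral_comp (Homeomorph.measurableEmbedding _)]
    simp only [hpoint]
    rw [integral_subtype_comap (measurableSet_singleton (0:E)).compl,
      restrict_compl_singleton]
  have transfer_int : ∀ H : E → ℝ, Integrable H μ →
      Integrable (fun p : sphere (0:E) 1 × Ioi (0:ℝ) => H ((p.2 : ℝ) • (p.1 : E)))
        (μ.toSphere.prod (Measure.volumeIoiPow (N - 1))) := by
    intro H hH
    rw [← hMP.integrable_comp_emb (Homeomorph.measurableEmbedding _), comp_eq H,
      show (fun x : ({0}ᶜ : Set E) => H ↑x) = H ∘ Subtype.val from rfl,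
      ← (MeasurableEmbedding.subtype_coe (measurableSet_singleton (0:E)).compl).integrable_map_iff,
      map_comap_subtype_coe (measurableSet_singleton (0:E)).compl,
      restrict_compl_singleton]
    exact hH
  -- measurability of F₁
  have hF₁meas : Measurable F₁ := (hu_cont.measurable.pow_const 2).div (measurable_norm.pow_const 2)
  -- Integrable F₂
  have hF₂cont : Continuous F₂ := hgrad_cont.norm.pow 2
  have hF₂supp : HasCompactSupport F₂ := by
    have h1 : HasCompactSupport (fderiv ℝ u) := hsupp.fderiv (𝕜 := ℝ)
    have h2 : HasCompactSupport (gradient u) := by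
      show HasCompactSupport fun x => (InnerProductSpace.toDual ℝ E).symm (fderiv ℝ u x)
      exact h1.comp_left (map_zero _)
    exact h2.comp_left (g := fun y : E => ‖y‖ ^ 2) (by simp)
  have hIntF₂ : Integrable F₂ μ := hF₂cont.integrable_of_hasCompactSupport hF₂supp
  -- Integrable F₁
  set K : ℝ := Mu ^ 2 * max 1 (R ^ (N - 3)) with hK
  have hK0 : 0 ≤ K := by positivity
  have hIntF₁ : Integrable F₁ μ := by
    refine ⟨hF₁meas.aestronglyMeasurable, ?_⟩
    show (∫⁻ x, (‖F₁ x‖₊ : ℝ≥0∞) ∂μ) < ⊤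
    have hmeasP : Measurable fun p : sphere (0:E) 1 × Ioi (0:ℝ) =>
        (‖F₁ ((p.2 : ℝ) • (p.1 : E))‖₊ : ℝ≥0∞) := by
      apply Measurable.coe_nnreal_ennreal
      apply Measurable.nnnorm
      exact hF₁meas.comp
        ((continuous_subtype_val.comp continuous_snd).smul
          (continuous_subtype_val.comp continuous_fst)).measurable
    have step1 : ∫⁻ x, (‖F₁ x‖₊ : ℝ≥0∞) ∂μ
        = ∫⁻ p : sphere (0:E) 1 × Ioi (0:ℝ), ‖F₁ ((p.2 : ℝ) • (p.1 : E))‖₊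
            ∂(μ.toSphere.prod (Measure.volumeIoiPow (N - 1))) := by
      rw [← hMP.lintegral_comp_emb (Homeomorph.measurableEmbedding _)]
      simp only [hpoint]
      rw [lintegral_subtype_comap (measurableSet_singleton (0:E)).compl
        (fun y : E => (‖F₁ y‖₊ : ℝ≥0∞)), restrict_compl_singleton]
    rw [step1, lintegral_prod _ hmeasP.aemeasurable]
    have inner_bd : ∀ ω : sphere (0:E) 1,
        (∫⁻ r : Ioi (0:ℝ), (‖F₁ ((r : ℝ) • (ω : E))‖₊ : ℝ≥0∞) ∂(Measure.volumeIoiPow (N - 1)))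
          ≤ ENNReal.ofReal K * ENNReal.ofReal R := by
      intro ω
      have hgmeas : Measurable fun r : Ioi (0:ℝ) => (‖F₁ ((r : ℝ) • (ω : E))‖₊ : ℝ≥0∞) :=
        (hF₁meas.comp (continuous_subtype_val.smul continuous_const).measurable).nnnorm.coe_nnreal_ennreal
      rw [Measure.volumeIoiPow, lintegral_withDensity_eq_lintegral_mul _
        ((measurable_subtype_coe.pow_const _).ennreal_ofReal) hgmeas]
      simp only [Pi.mul_apply]
      rw [lintegral_subtype_comap measurableSet_Ioi
        (fun t : ℝ => ENNReal.ofReal (t ^ (N-1)) * (‖F₁ (t • (ω : E))‖₊ : ℝ≥0∞))]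
      calc ∫⁻ t in Ioi (0:ℝ), ENNReal.ofReal (t ^ (N-1)) * (‖F₁ (t • (ω : E))‖₊ : ℝ≥0∞)
          ≤ ∫⁻ t in Ioi (0:ℝ), (Ioc (0:ℝ) R).indicator (fun _ => ENNReal.ofReal K) t := by
            refine setLIntegral_mono (measurable_const.indicator measurableSet_Ioc) ?_
            intro r hr
            have hr0 : (0:ℝ) < r := hr
            by_cases hrR : r ≤ R
            · rw [Set.indicator_of_mem (mem_Ioc.mpr ⟨hr0, hrR⟩)]
              have hFval : F₁ (r • (ω : E)) = u (r • (ω : E)) ^ 2 / r ^ 2 := by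
                show u _ ^ 2 / ‖r • (ω : E)‖ ^ 2 = _
                rw [hnorm ω r hr0.le]
              rw [hFval, show ((‖u (r • (ω : E)) ^ 2 / r ^ 2‖₊ : ℝ≥0∞)) = ENNReal.ofReal (u (r • (ω : E)) ^ 2 / r ^ 2) from Real.enorm_eq_ofReal (by positivity),
                ← ENNReal.ofReal_mul (by positivity)]
              apply ENNReal.ofReal_le_ofReal
              have heq : r ^ (N-1) * (u (r • (ω : E)) ^ 2 / r ^ 2)
                  = u (r • (ω : E)) ^ 2 * r ^ (N-3) := by
                rw [show N-1 = N-3+2 from by omega, pow_add]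
                field_simp
              rw [heq]
              have h1 : u (r • (ω : E)) ^ 2 ≤ Mu ^ 2 := by
                have h := hMu (r • (ω : E))
                rw [Real.norm_eq_abs] at h
                nlinarith [abs_nonneg (u (r • (ω : E))), sq_abs (u (r • (ω : E)))]
              have h2 : r ^ (N-3) ≤ max 1 (R ^ (N-3)) := by
                rcases le_total r 1 with h | h
                · exact le_trans (pow_le_one₀ hr0.le h) (le_max_left _ _)
                · exact le_trans (pow_le_pow_left₀ (by linarith) hrR _) (le_max_right _ _)
              calc u (r • (ω : E)) ^ 2 * r ^ (N-3)
                  ≤ Mu ^ 2 * max 1 (R ^ (N-3)) :=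
                    mul_le_mul h1 h2 (pow_nonneg hr0.le _) (by positivity)
                _ = K := hK.symm
            · have hu0 : u (r • (ω : E)) = 0 :=
                huR _ (by rw [hnorm ω r hr0.le]; linarith)
              have hF0 : F₁ (r • (ω : E)) = 0 := by
                show u _ ^ 2 / ‖r • (ω : E)‖ ^ 2 = 0
                rw [hu0]; simp
              simp [hF0]
        _ ≤ ∫⁻ t, (Ioc (0:ℝ) R).indicator (fun _ => ENNReal.ofReal K) t :=
            setLIntegral_le_lintegral _ _
        _ = ENNReal.ofReal K * volume (Ioc (0:ℝ) R) := by
            rw [lintegral_indicator measurableSet_Ioc, setLIntegral_const]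
        _ = ENNReal.ofReal K * ENNReal.ofReal R := by
            rw [Real.volume_Ioc, sub_zero]
    calc ∫⁻ ω : sphere (0:E) 1, ∫⁻ r : Ioi (0:ℝ), (‖F₁ ((r : ℝ) • (ω : E))‖₊ : ℝ≥0∞)
          ∂(Measure.volumeIoiPow (N - 1)) ∂μ.toSphere
        ≤ ∫⁻ _ω : sphere (0:E) 1, ENNReal.ofReal K * ENNReal.ofReal R ∂μ.toSphere :=
          lintegral_mono inner_bd
      _ = ENNReal.ofReal K * ENNReal.ofReal R * μ.toSphere univ := lintegral_const _
      _ < ⊤ := by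
          refine ENNReal.mul_lt_top (ENNReal.mul_lt_top ?_ ?_) (measure_lt_top _ _) <;>
            exact ENNReal.ofReal_lt_top
  -- main inequality
  set H : E → ℝ := fun x => F₂ x - c ^ 2 / 4 * F₁ x with hHdef
  have hIntH : Integrable H μ := hIntF₂.sub (hIntF₁.const_mul _)
  have keypos : 0 ≤ ∫ x, H x ∂μ := by
    rw [transfer_eq H, integral_prod _ (transfer_int H hIntH)]
    apply integral_nonneg_of_ae
    filter_upwards [(transfer_int F₁ hIntF₁).prod_right_ae,
      (transfer_int F₂ hIntF₂).prod_right_ae] with ω hω₁ hω₂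
    show 0 ≤ ∫ r : Ioi (0:ℝ), H ((r : ℝ) • (ω : E)) ∂(Measure.volumeIoiPow (N - 1))
    have hω₁' : Integrable (fun r : Ioi (0:ℝ) => F₁ ((r : ℝ) • (ω : E)))
        (Measure.volumeIoiPow (N - 1)) := hω₁
    have hω₂' : Integrable (fun r : Ioi (0:ℝ) => F₂ ((r : ℝ) • (ω : E)))
        (Measure.volumeIoiPow (N - 1)) := hω₂
    set f : ℝ → ℝ := fun r => u (r • (ω : E)) with hfdef
    set fd : ℝ → ℝ := fun r => (fderiv ℝ u (r • (ω : E))) (ω : E) with hfddef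
    set G : ℝ → ℝ := fun r => ‖gradient u (r • (ω : E))‖ with hGdef
    have hsmul_cont : Continuous fun r : ℝ => r • (ω : E) := continuous_id.smul continuous_const
    have hfc : Continuous f := hu_cont.comp hsmul_cont
    have hfd' : ∀ r, HasDerivAt f (fd r) r := by
      intro r
      have h1 : HasDerivAt (fun s : ℝ => s • (ω : E)) (ω : E) r := by
        simpa using (hasDerivAt_id r).smul_const (ω : E)
      exact ((hu.differentiable (by simp) (r • (ω : E))).hasFDerivAt).comp_hasDerivAt r h1
    have hfdc : Continuous fd :=
      ((hu.continuous_fderiv (by simp)).comp hsmul_cont).clm_apply continuous_const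
    have hGfd : ∀ r, |fd r| ≤ G r := by
      intro r
      show |fd r| ≤ ‖gradient u (r • (ω : E))‖
      rw [hgrad_norm]
      calc |fd r| = ‖(fderiv ℝ u (r • (ω : E))) (ω : E)‖ := (Real.norm_eq_abs _).symm
        _ ≤ ‖fderiv ℝ u (r • (ω : E))‖ * ‖(ω : E)‖ := (fderiv ℝ u _).le_opNorm _
        _ = ‖fderiv ℝ u (r • (ω : E))‖ := by rw [mem_sphere_zero_iff_norm.1 ω.2, mul_one]
    have hfR : ∀ r, R ≤ r → f r = 0 := fun r hr =>
      huR _ (by rw [hnorm ω r (by linarith)]; exact hr)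
    -- slice integrabilities
    have hA : IntegrableOn (fun r => r ^ (N-1) * (f r ^ 2 / r ^ 2)) (Ioi (0:ℝ)) := by
      have h0 := (bridge_integrable (N-1) (fun t : ℝ => F₁ (t • (ω : E)))).1 hω₁'
      refine (integrable_congr ?_).1 h0
      filter_upwards [ae_restrict_mem measurableSet_Ioi] with t ht
      show t ^ (N-1) * (u (t • (ω : E)) ^ 2 / ‖t • (ω : E)‖ ^ 2) = _
      rw [hnorm ω t ht.out.le]
    have hB : IntegrableOn (fun r => r ^ (N-1) * G r ^ 2) (Ioi (0:ℝ)) :=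
      (bridge_integrable (N-1) (fun t : ℝ => F₂ (t • (ω : E)))).1 hω₂'
    have hkey := oneDim N hN f fd G hfc hfd' hfdc hGfd R hR1 hfR hA hB
    have e₁ : ∫ r : Ioi (0:ℝ), F₁ ((r : ℝ) • (ω : E)) ∂(Measure.volumeIoiPow (N - 1))
        = ∫ r in Ioi (0:ℝ), r ^ (N-1) * (f r ^ 2 / r ^ 2) := by
      rw [bridge_integral (N-1) (fun t : ℝ => F₁ (t • (ω : E)))]
      refine setIntegral_congr_fun measurableSet_Ioi fun t ht => ?_
      show t ^ (N-1) * (u (t • (ω : E)) ^ 2 / ‖t • (ω : E)‖ ^ 2) = _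
      rw [hnorm ω t ht.out.le]
    have e₂ : ∫ r : Ioi (0:ℝ), F₂ ((r : ℝ) • (ω : E)) ∂(Measure.volumeIoiPow (N - 1))
        = ∫ r in Ioi (0:ℝ), r ^ (N-1) * G r ^ 2 :=
      bridge_integral (N-1) (fun t : ℝ => F₂ (t • (ω : E)))
    have hsplit : ∫ r : Ioi (0:ℝ), H ((r : ℝ) • (ω : E)) ∂(Measure.volumeIoiPow (N - 1))
        = (∫ r : Ioi (0:ℝ), F₂ ((r : ℝ) • (ω : E)) ∂(Measure.volumeIoiPow (N - 1)))
          - c ^ 2 / 4 * ∫ r : Ioi (0:ℝ), F₁ ((r : ℝ) • (ω : E))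
              ∂(Measure.volumeIoiPow (N - 1)) := by
      rw [show (fun r : Ioi (0:ℝ) => H ((r : ℝ) • (ω : E)))
          = fun r : Ioi (0:ℝ) => F₂ ((r : ℝ) • (ω : E)) - c ^ 2 / 4 * F₁ ((r : ℝ) • (ω : E))
          from rfl, integral_sub hω₂' (hω₁'.const_mul _), integral_const_mul]
    rw [hsplit, e₁, e₂]
    linarith [hkey]
  have hfin : ∫ x, H x ∂μ = (∫ x, F₂ x ∂μ) - c ^ 2 / 4 * ∫ x, F₁ x ∂μ := by
    rw [show H = fun x => F₂ x - c ^ 2 / 4 * F₁ x from rfl,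
      integral_sub hIntF₂ (hIntF₁.const_mul _), integral_const_mul]
  rw [hfin] at keypos
  linarith

/-- **Hardy inequality.** For `N ≥ 3` and any smooth compactly supported
`u : ℝ^N → ℝ`, one has `((N-2)²/4) ∫ u²/|x|² ≤ ∫ |∇u|²`. -/
theorem stmt_0 (N : ℕ) (hN : 3 ≤ N)
    (u : EuclideanSpace ℝ (Fin N) → ℝ)
    (hu : ContDiff ℝ (⊤ : ℕ∞) u) (hsupp : HasCompactSupport u) :
    ((N : ℝ) - 2) ^ 2 / 4 * ∫ x, u x ^ 2 / ‖x‖ ^ 2 ≤ ∫ x, ‖gradient u x‖ ^ 2 :=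
  hardy_main N hN finrank_euclideanSpace_fin volume u hu hsupp
end

section
/- Let μ₁, μ₂, β > 0 and γ > 0. The function F_γ is continuously differentiable on ℝ², and its gradient satisfies: ∇F_γ(s,t) = (μ₁ s³ + β s t², μ₂ t³ + β s² t) at every point with F(s,t) ≤ γ²/4, and ∇F_γ(s,t) = (γ/(2√(F(s,t)))) · (μ₁ s³ + β s t², μ₂ t³ + β s² t) at every point with F(s,t) > γ²/4. -/
/-- `F(s,t) = (1/4)(μ₁ s⁴ + 2β s² t² + μ₂ t⁴)`. -/
noncomputable def F (μ₁ μ₂ β s t : ℝ) : ℝ :=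
  (1 / 4) * (μ₁ * s ^ 4 + 2 * β * s ^ 2 * t ^ 2 + μ₂ * t ^ 4)

/-- The truncated nonlinearity `F_γ`. -/
noncomputable def Ftrunc (μ₁ μ₂ β γ s t : ℝ) : ℝ :=
  if F μ₁ μ₂ β s t ≤ γ ^ 2 / 4 then F μ₁ μ₂ β s t
  else γ * Real.sqrt (F μ₁ μ₂ β s t) - γ ^ 2 / 4

/-!
`F_γ = g ∘ F` for the scalar truncation `g = sqrtTrunc γ`: `g y = y` for `y ≤ γ²/4` and
`g y = γ √y - γ²/4` beyond. Both branches take the value `γ²/4` with slope `1` at the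
threshold `γ²/4 = (γ/2)²`, so `g` is `C¹` with `g' y = γ / (2 √(max y (γ²/4)))`, and the
chain rule gives both gradient formulas.
-/

open ContinuousLinearMap

theorem HasDerivAt.ite_le {E : Type*} [NormedAddCommGroup E] [NormedSpace ℝ E]
    {f g : ℝ → E} {f' : E} {a : ℝ} (hf : HasDerivAt f f' a) (hg : HasDerivAt g f' a)
    (hfg : f a = g a) : HasDerivAt (fun x => if x ≤ a then f x else g x) f' a := by
  have hleft : HasDerivWithinAt (fun x => if x ≤ a then f x else g x) f' (Set.Iic a) a :=
    hf.hasDerivWithinAt.congr_of_mem (fun x hx => if_pos hx) Set.self_mem_Iic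
  have hright : HasDerivWithinAt (fun x => if x ≤ a then f x else g x) f' (Set.Ici a) a := by
    refine hg.hasDerivWithinAt.congr_of_mem (fun x hx => ?_) Set.self_mem_Ici
    rcases (Set.mem_Ici.mp hx).eq_or_lt with rfl | hlt
    · exact (if_pos le_rfl).trans hfg
    · exact if_neg hlt.not_ge
  simpa only [Set.Iic_union_Ici, hasDerivWithinAt_univ] using hleft.union hright

noncomputable def sqrtTrunc (γ y : ℝ) : ℝ :=
  if y ≤ γ ^ 2 / 4 then y else γ * Real.sqrt y - γ ^ 2 / 4

theorem Ftrunc_eq_sqrtTrunc_comp (μ₁ μ₂ β γ : ℝ) :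
    (fun p : ℝ × ℝ => Ftrunc μ₁ μ₂ β γ p.1 p.2) =
      fun p : ℝ × ℝ => sqrtTrunc γ (F μ₁ μ₂ β p.1 p.2) :=
  rfl

theorem sqrt_sq_div_four {γ : ℝ} (hγ : 0 ≤ γ) : Real.sqrt (γ ^ 2 / 4) = γ / 2 := by
  rw [show γ ^ 2 / 4 = (γ / 2) ^ 2 by ring, Real.sqrt_sq (by positivity)]

theorem hasDerivAt_const_mul_sqrt_sub (c d : ℝ) {y : ℝ} (hy : 0 < y) :
    HasDerivAt (fun z => c * Real.sqrt z - d) (c / (2 * Real.sqrt y)) y := by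
  simpa only [mul_one_div] using ((Real.hasDerivAt_sqrt hy.ne').const_mul c).sub_const d

section Truncation

variable {γ : ℝ} (hγ : 0 < γ)
include hγ

theorem div_two_mul_sqrt_sq_div_four : γ / (2 * Real.sqrt (γ ^ 2 / 4)) = 1 := by
  rw [sqrt_sq_div_four hγ.le]
  field_simp

theorem hasDerivAt_sqrtTrunc (x : ℝ) :
    HasDerivAt (sqrtTrunc γ) (γ / (2 * Real.sqrt (max x (γ ^ 2 / 4)))) x := by
  have hthreshold : (0 : ℝ) < γ ^ 2 / 4 := by positivity
  rcases lt_trichotomy x (γ ^ 2 / 4) with hx | rfl | hx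
  · rw [max_eq_right hx.le, div_two_mul_sqrt_sq_div_four hγ]
    refine (hasDerivAt_id x).congr_of_eventuallyEq ?_
    filter_upwards [Iio_mem_nhds hx] with y hy
    exact if_pos hy.le
  · rw [max_self, div_two_mul_sqrt_sq_div_four hγ]
    refine (hasDerivAt_id _).ite_le ?_ ?_
    · simpa only [div_two_mul_sqrt_sq_div_four hγ] using
        hasDerivAt_const_mul_sqrt_sub γ (γ ^ 2 / 4) hthreshold
    · rw [id, sqrt_sq_div_four hγ.le]
      ring
  · rw [max_eq_left hx.le]
    refine (hasDerivAt_const_mul_sqrt_sub γ (γ ^ 2 / 4) (hthreshold.trans hx))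
      |>.congr_of_eventuallyEq ?_
    filter_upwards [Ioi_mem_nhds hx] with y hy
    exact if_neg hy.not_ge

theorem contDiff_sqrtTrunc : ContDiff ℝ 1 (sqrtTrunc γ) := by
  rw [contDiff_one_iff_deriv]
  refine ⟨fun x => (hasDerivAt_sqrtTrunc hγ x).differentiableAt, ?_⟩
  rw [funext fun x => (hasDerivAt_sqrtTrunc hγ x).deriv]
  refine continuous_const.div (by fun_prop) fun x => ?_
  have : 0 < Real.sqrt (max x (γ ^ 2 / 4)) :=
    Real.sqrt_pos.mpr (lt_max_of_lt_right (by positivity))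
  positivity

end Truncation

noncomputable def gradF (μ₁ μ₂ β s t : ℝ) : ℝ × ℝ →L[ℝ] ℝ :=
  (μ₁ * s ^ 3 + β * s * t ^ 2) • fst ℝ ℝ ℝ + (μ₂ * t ^ 3 + β * s ^ 2 * t) • snd ℝ ℝ ℝ

theorem gradF_apply (μ₁ μ₂ β s t : ℝ) (h : ℝ × ℝ) :
    gradF μ₁ μ₂ β s t h =
      (μ₁ * s ^ 3 + β * s * t ^ 2) * h.1 + (μ₂ * t ^ 3 + β * s ^ 2 * t) * h.2 :=
  rfl

theorem hasFDerivAt_F (μ₁ μ₂ β s t : ℝ) :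
    HasFDerivAt (fun p : ℝ × ℝ => F μ₁ μ₂ β p.1 p.2) (gradF μ₁ μ₂ β s t) (s, t) := by
  have hs := hasFDerivAt_fst (𝕜 := ℝ) (E := ℝ) (F := ℝ) (p := (s, t))
  have ht := hasFDerivAt_snd (𝕜 := ℝ) (E := ℝ) (F := ℝ) (p := (s, t))
  have H := ((((hs.pow 4).const_mul μ₁).add (((hs.pow 2).const_mul (2 * β)).mul (ht.pow 2))).add
    ((ht.pow 4).const_mul μ₂)).const_mul (1 / 4 : ℝ)
  refine H.congr_fderiv (ContinuousLinearMap.ext fun h => ?_)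
  simp only [smul_apply, add_apply, smul_eq_mul, coe_fst', coe_snd', gradF_apply]
  ring

theorem hasFDerivAt_Ftrunc {γ : ℝ} (hγ : 0 < γ) (μ₁ μ₂ β s t : ℝ) :
    HasFDerivAt (fun p : ℝ × ℝ => Ftrunc μ₁ μ₂ β γ p.1 p.2)
      ((γ / (2 * Real.sqrt (max (F μ₁ μ₂ β s t) (γ ^ 2 / 4)))) • gradF μ₁ μ₂ β s t) (s, t) :=
  (hasDerivAt_sqrtTrunc hγ _).comp_hasFDerivAt (s, t) (hasFDerivAt_F μ₁ μ₂ β s t)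

theorem stmt_3_general (μ₁ μ₂ β γ : ℝ) (hγ : 0 < γ) :
    ContDiff ℝ 1 (fun p : ℝ × ℝ => Ftrunc μ₁ μ₂ β γ p.1 p.2) ∧
    (∀ s t : ℝ, F μ₁ μ₂ β s t ≤ γ ^ 2 / 4 →
      ∀ h : ℝ × ℝ, fderiv ℝ (fun p : ℝ × ℝ => Ftrunc μ₁ μ₂ β γ p.1 p.2) (s, t) h =
        (μ₁ * s ^ 3 + β * s * t ^ 2) * h.1 + (μ₂ * t ^ 3 + β * s ^ 2 * t) * h.2) ∧
    (∀ s t : ℝ, γ ^ 2 / 4 < F μ₁ μ₂ β s t →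
      ∀ h : ℝ × ℝ, fderiv ℝ (fun p : ℝ × ℝ => Ftrunc μ₁ μ₂ β γ p.1 p.2) (s, t) h =
        γ / (2 * Real.sqrt (F μ₁ μ₂ β s t)) *
          ((μ₁ * s ^ 3 + β * s * t ^ 2) * h.1 + (μ₂ * t ^ 3 + β * s ^ 2 * t) * h.2)) := by
  refine ⟨?_, fun s t hle h => ?_, fun s t hlt h => ?_⟩
  · rw [Ftrunc_eq_sqrtTrunc_comp]
    exact (contDiff_sqrtTrunc hγ).comp (by unfold F; fun_prop)
  · rw [(hasFDerivAt_Ftrunc hγ μ₁ μ₂ β s t).fderiv, max_eq_right hle,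
      div_two_mul_sqrt_sq_div_four hγ, one_smul, gradF_apply]
  · rw [(hasFDerivAt_Ftrunc hγ μ₁ μ₂ β s t).fderiv, max_eq_left hlt.le, smul_apply,
      gradF_apply, smul_eq_mul]

/-- `F_γ` is `C¹` on `ℝ²`, and its (Fréchet) differential is given by the
pointwise formulas for the gradient in the two regions. -/
theorem stmt_3 (μ₁ μ₂ β γ : ℝ) (hμ₁ : 0 < μ₁) (hμ₂ : 0 < μ₂) (hβ : 0 < β) (hγ : 0 < γ) :
    ContDiff ℝ 1 (fun p : ℝ × ℝ => Ftrunc μ₁ μ₂ β γ p.1 p.2) ∧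
    (∀ s t : ℝ, F μ₁ μ₂ β s t ≤ γ ^ 2 / 4 →
      ∀ h : ℝ × ℝ, fderiv ℝ (fun p : ℝ × ℝ => Ftrunc μ₁ μ₂ β γ p.1 p.2) (s, t) h =
        (μ₁ * s ^ 3 + β * s * t ^ 2) * h.1 + (μ₂ * t ^ 3 + β * s ^ 2 * t) * h.2) ∧
    (∀ s t : ℝ, γ ^ 2 / 4 < F μ₁ μ₂ β s t →
      ∀ h : ℝ × ℝ, fderiv ℝ (fun p : ℝ × ℝ => Ftrunc μ₁ μ₂ β γ p.1 p.2) (s, t) h =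
        γ / (2 * Real.sqrt (F μ₁ μ₂ β s t)) *
          ((μ₁ * s ^ 3 + β * s * t ^ 2) * h.1 + (μ₂ * t ^ 3 + β * s ^ 2 * t) * h.2)) :=
  stmt_3_general μ₁ μ₂ β γ hγ
end

section
/- Let μ₁, μ₂, β > 0 and let α₀ > 0 be a constant such that max{μ₁ s² + β t², β s² + μ₂ t²} ≤ 2α₀·√(F(s,t)) for all s, t ∈ ℝ. Then for every γ > 0 and all (s,t) with F(s,t) > γ²/4 one has |∂ₛF_γ(s,t)| ≤ α₀·γ·|s| and |∂ₜF_γ(s,t)| ≤ α₀·γ·|t|. -/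
/-- Partial derivative of `F_γ` with respect to the first argument. -/
noncomputable def dsFtrunc (μ₁ μ₂ β γ s t : ℝ) : ℝ :=
  deriv (fun s' => Ftrunc μ₁ μ₂ β γ s' t) s

/-- Partial derivative of `F_γ` with respect to the second argument. -/
noncomputable def dtFtrunc (μ₁ μ₂ β γ s t : ℝ) : ℝ :=
  deriv (fun t' => Ftrunc μ₁ μ₂ β γ s t') t

-- `Ftrunc μ₁ μ₂ β γ · t` is `truncate γ (F μ₁ μ₂ β · t)` by definition.
noncomputable def truncate (γ : ℝ) (g : ℝ → ℝ) (y : ℝ) : ℝ :=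
  if g y ≤ γ ^ 2 / 4 then g y else γ * Real.sqrt (g y) - γ ^ 2 / 4

theorem HasDerivAt.truncate {g : ℝ → ℝ} {g' x : ℝ} (γ : ℝ) (hg : HasDerivAt g g' x)
    (hx : γ ^ 2 / 4 < g x) :
    HasDerivAt (truncate γ g) (γ * (g' / (2 * Real.sqrt (g x)))) x := by
  have hgx : g x ≠ 0 := ((by positivity : (0:ℝ) ≤ γ ^ 2 / 4).trans_lt hx).ne'
  refine (((hg.sqrt hgx).const_mul γ).sub_const (γ ^ 2 / 4)).congr_of_eventuallyEq ?_
  filter_upwards [hg.continuousAt.eventually (lt_mem_nhds hx)] with y hy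
  exact if_neg hy.not_ge

theorem F_comm (μ₁ μ₂ β s t : ℝ) : F μ₁ μ₂ β s t = F μ₂ μ₁ β t s := by
  simp only [F]; ring

theorem hasDerivAt_F_left (μ₁ μ₂ β s t : ℝ) :
    HasDerivAt (fun s' => F μ₁ μ₂ β s' t) (s * (μ₁ * s ^ 2 + β * t ^ 2)) s := by
  have h := ((((hasDerivAt_pow 4 s).const_mul μ₁).add
    (((hasDerivAt_pow 2 s).const_mul (2 * β)).mul_const (t ^ 2))).add_const
    (μ₂ * t ^ 4)).const_mul (1 / 4)
  exact h.congr_deriv (by ring)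

theorem abs_dsFtrunc_le {μ₁ μ₂ β α₀ γ s t : ℝ} (hμ₁ : 0 ≤ μ₁) (hβ : 0 ≤ β) (hγ : 0 ≤ γ)
    (hbound : μ₁ * s ^ 2 + β * t ^ 2 ≤ 2 * α₀ * Real.sqrt (F μ₁ μ₂ β s t))
    (hst : γ ^ 2 / 4 < F μ₁ μ₂ β s t) :
    |dsFtrunc μ₁ μ₂ β γ s t| ≤ α₀ * γ * |s| := by
  set A := μ₁ * s ^ 2 + β * t ^ 2
  set R := Real.sqrt (F μ₁ μ₂ β s t)
  have hR : 0 < 2 * R := by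
    have : 0 < F μ₁ μ₂ β s t := (by positivity : (0:ℝ) ≤ γ ^ 2 / 4).trans_lt hst
    positivity
  have hA : 0 ≤ A := by positivity
  rw [show dsFtrunc μ₁ μ₂ β γ s t = _ from
    ((hasDerivAt_F_left μ₁ μ₂ β s t).truncate γ hst).deriv]
  calc |γ * (s * A / (2 * R))| = γ * |s| * (A / (2 * R)) := by
        rw [abs_mul, abs_of_nonneg hγ, abs_div, abs_mul, abs_of_nonneg hA, abs_of_pos hR]
        ring
    _ ≤ γ * |s| * α₀ := by
        gcongr
        rw [div_le_iff₀ hR]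
        linarith
    _ = α₀ * γ * |s| := by ring

theorem dtFtrunc_eq_dsFtrunc (μ₁ μ₂ β γ s t : ℝ) :
    dtFtrunc μ₁ μ₂ β γ s t = dsFtrunc μ₂ μ₁ β γ t s := by
  simp only [dtFtrunc, dsFtrunc, Ftrunc, F_comm μ₁ μ₂ β s]

theorem stmt_6_general (μ₁ μ₂ β : ℝ) (hμ₁ : 0 < μ₁) (hμ₂ : 0 < μ₂) (hβ : 0 < β)
    (α₀ : ℝ)
    (hbound : ∀ s t : ℝ,
      max (μ₁ * s ^ 2 + β * t ^ 2) (β * s ^ 2 + μ₂ * t ^ 2) ≤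
        2 * α₀ * Real.sqrt (F μ₁ μ₂ β s t))
    (γ : ℝ) (hγ : 0 < γ) (s t : ℝ) (hst : γ ^ 2 / 4 < F μ₁ μ₂ β s t) :
    |dsFtrunc μ₁ μ₂ β γ s t| ≤ α₀ * γ * |s| ∧
    |dtFtrunc μ₁ μ₂ β γ s t| ≤ α₀ * γ * |t| := by
  have hbound_s := (le_max_left _ _).trans (hbound s t)
  have hbound_t := (le_max_right _ _).trans (hbound s t)
  refine ⟨abs_dsFtrunc_le hμ₁.le hβ.le hγ.le hbound_s hst, ?_⟩
  rw [dtFtrunc_eq_dsFtrunc]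
  rw [F_comm] at hbound_t hst
  exact abs_dsFtrunc_le hμ₂.le hβ.le hγ.le (by linarith) hst

theorem stmt_6 (μ₁ μ₂ β : ℝ) (hμ₁ : 0 < μ₁) (hμ₂ : 0 < μ₂) (hβ : 0 < β)
    (α₀ : ℝ) (hα₀ : 0 < α₀)
    (hbound : ∀ s t : ℝ,
      max (μ₁ * s ^ 2 + β * t ^ 2) (β * s ^ 2 + μ₂ * t ^ 2) ≤
        2 * α₀ * Real.sqrt (F μ₁ μ₂ β s t))
    (γ : ℝ) (hγ : 0 < γ) (s t : ℝ) (hst : γ ^ 2 / 4 < F μ₁ μ₂ β s t) :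
    |dsFtrunc μ₁ μ₂ β γ s t| ≤ α₀ * γ * |s| ∧
    |dtFtrunc μ₁ μ₂ β γ s t| ≤ α₀ * γ * |t| :=
  stmt_6_general μ₁ μ₂ β hμ₁ hμ₂ hβ α₀ hbound γ hγ s t hst
end
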